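/- In the sugar-chocolate model with |λ₁|² > 1/2 > |λ₂|² > 0 and |μ₁|² > 1/2 > |μ₂|² > 0, the total probability law is violated: |μ₁|² ≠ |λ₂|²|μ₁|²/(|λ₂|²|μ₁|² + |λ₁|²|μ₂|²) whenever |λ₁|² ≠ |λ₂|². In particular P(C=1) = tr(E₁ Λ_C*(ρ)) = |μ₁|² differs from P(S=1,C=1)+P(S=2,C=1). -/

import Mathlib

/-!
For diagonal `C = diag c` the channel `ρ ↦ C*ρC / tr(|C|²ρ)` multiplies the diagonal of `ρ` by
`|cᵢ|²` and renormalises; on the neutral state, whose diagonal is `(1/2, 1/2)`, it returns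
`(|c₁|², |c₂|²)`, so `P(C=1) = |μ₁|²`. Summing the joint law over `S` uses `E₁ + E₂ = 1` and
`tr ρ_S = 1`, which leaves the `(1,1)` entry of `Λ_C*(X ρ_S X)`. The swap `X` turns the diagonal of
`ρ_S` into `(|λ₂|², |λ₁|²)`, so this entry is `|λ₂|²|μ₁|² / (|λ₂|²|μ₁|² + |λ₁|²|μ₂|²)`. Setting it
equal to `|μ₁|²` and using `|μ₁|² + |μ₂|² = 1` gives `|μ₁|²|μ₂|² (|λ₁|² - |λ₂|²) = 0`.
-/

open Matrix
open scoped ComplexOrder Kronecker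

/-- The neutral state vector x₀ = (e₁ + e₂)/√2. -/
noncomputable def x₀ : Fin 2 → ℂ := fun _ => (Real.sqrt 2 : ℂ)⁻¹

/-- The neutral initial tongue state ρ = |x₀⟩⟨x₀|. -/
noncomputable def ρ₀ : Matrix (Fin 2) (Fin 2) ℂ := vecMulVec x₀ (star x₀)

/-- The adaptive channel ρ ↦ A*ρA / tr(|A|²ρ). -/
noncomputable def chan (A ρ : Matrix (Fin 2) (Fin 2) ℂ) : Matrix (Fin 2) (Fin 2) ℂ :=
  ((Aᴴ * A * ρ).trace)⁻¹ • (Aᴴ * ρ * A)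

/-- The exchanging (swap) operator X. -/
def Xop : Matrix (Fin 2) (Fin 2) ℂ := !![0, 1; 1, 0]

/-- Standard rank-one projections E₁, E₂. -/
def E₁ : Matrix (Fin 2) (Fin 2) ℂ := !![1, 0; 0, 0]
def E₂ : Matrix (Fin 2) (Fin 2) ℂ := !![0, 0; 0, 1]

lemma ρ₀_apply (i j : Fin 2) : ρ₀ i j = 2⁻¹ := by
  have h : ((Real.sqrt 2 : ℂ))⁻¹ * ((Real.sqrt 2 : ℂ))⁻¹ = 2⁻¹ := by
    rw [← mul_inv, ← Complex.ofReal_mul, Real.mul_self_sqrt zero_le_two, Complex.ofReal_ofNat]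
  simpa [ρ₀, x₀, vecMulVec_apply, Complex.conj_ofReal] using h

lemma chan_diagonal_apply_self (c : Fin 2 → ℂ) (ρ : Matrix (Fin 2) (Fin 2) ℂ) (i : Fin 2) :
    chan (diagonal c) ρ i i =
      (∑ j, (Complex.normSq (c j) : ℂ) * ρ j j)⁻¹ * (Complex.normSq (c i) * ρ i i) := by
  simp only [chan, diagonal_conjTranspose, diagonal_mul_diagonal, Matrix.smul_apply, smul_eq_mul,
    trace, diag_apply, diagonal_mul, mul_diagonal, Pi.star_apply, Complex.normSq_eq_conj_mul_self]
  simp only [RCLike.star_def]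
  ring

lemma chan_diagonal_ρ₀_apply_self (c : Fin 2 → ℂ) (hc : ∑ j, Complex.normSq (c j) = 1)
    (i : Fin 2) : chan (diagonal c) ρ₀ i i = Complex.normSq (c i) := by
  have hc' : ∑ j, (Complex.normSq (c j) : ℂ) = 1 := by exact_mod_cast hc
  rw [chan_diagonal_apply_self]
  simp only [ρ₀_apply, ← Finset.sum_mul, hc']
  field_simp

lemma Xop_mul_mul_Xop (M : Matrix (Fin 2) (Fin 2) ℂ) :
    Xop * M * Xop = !![M 1 1, M 1 0; M 0 1, M 0 0] := by
  ext i j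
  fin_cases i <;> fin_cases j <;> simp [Xop, mul_apply, vecMul, dotProduct, Fin.sum_univ_two]

lemma E₁_add_E₂ : E₁ + E₂ = 1 := by
  ext i j
  fin_cases i <;> fin_cases j <;> simp [E₁, E₂]

lemma trace_E₁_mul (A : Matrix (Fin 2) (Fin 2) ℂ) : (E₁ * A).trace = A 0 0 := by
  simp [E₁, trace, vecMul, dotProduct, Fin.sum_univ_two]

lemma trace_kronecker_E₁_add_E₂ (E σ τ : Matrix (Fin 2) (Fin 2) ℂ) :
    ((E₁ ⊗ₖ E) * (σ ⊗ₖ τ)).trace + ((E₂ ⊗ₖ E) * (σ ⊗ₖ τ)).trace = σ.trace * (E * τ).trace := by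
  rw [← mul_kronecker_mul, ← mul_kronecker_mul, trace_kronecker, trace_kronecker, ← add_mul,
    ← trace_add, ← add_mul, E₁_add_E₂, one_mul]

lemma ne_mul_div_add_mul {K : Type*} [Field K] {a b p q : K} (hpq : p + q = 1) (hp : p ≠ 0)
    (hq : q ≠ 0) (hab : a ≠ b) : p ≠ b * p / (b * p + a * q) := by
  intro h
  rcases eq_or_ne (b * p + a * q) 0 with hD | hD
  · rw [hD, div_zero] at h
    exact hp h
  · rw [eq_div_iff hD] at h
    have : p * q * (a - b) = 0 := by linear_combination h - b * p * hpq
    simp [hp, hq, sub_eq_zero, hab] at this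

theorem stmt_12_general (l₁ l₂ m₁ m₂ : ℂ)
    (hl : Complex.normSq l₁ + Complex.normSq l₂ = 1)
    (hm : Complex.normSq m₁ + Complex.normSq m₂ = 1)
    (hm₁ : 1 / 2 < Complex.normSq m₁)
    (hm₂pos : 0 < Complex.normSq m₂)
    (hdiff : Complex.normSq l₁ ≠ Complex.normSq l₂) :
    (E₁ * chan !![m₁, 0; 0, m₂] ρ₀).trace = ((Complex.normSq m₁ : ℝ) : ℂ) ∧
    (Complex.normSq m₁ : ℝ) ≠
      Complex.normSq l₂ * Complex.normSq m₁ /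
        (Complex.normSq l₂ * Complex.normSq m₁ + Complex.normSq l₁ * Complex.normSq m₂) ∧
    (E₁ * chan !![m₁, 0; 0, m₂] ρ₀).trace ≠
      ((E₁ ⊗ₖ E₁) * (chan !![l₁, 0; 0, l₂] ρ₀ ⊗ₖ
          chan !![m₁, 0; 0, m₂] (Xop * chan !![l₁, 0; 0, l₂] ρ₀ * Xop))).trace +
      ((E₂ ⊗ₖ E₁) * (chan !![l₁, 0; 0, l₂] ρ₀ ⊗ₖ
          chan !![m₁, 0; 0, m₂] (Xop * chan !![l₁, 0; 0, l₂] ρ₀ * Xop))).trace := by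
  simp only [← diagonal_vec2]
  have hS := chan_diagonal_ρ₀_apply_self ![l₁, l₂] (by simpa [Fin.sum_univ_two] using hl)
  have hC := chan_diagonal_ρ₀_apply_self ![m₁, m₂] (by simpa [Fin.sum_univ_two] using hm)
  have hP : (E₁ * chan (diagonal ![m₁, m₂]) ρ₀).trace = Complex.normSq m₁ := by
    rw [trace_E₁_mul, hC]; rfl
  have hne := ne_mul_div_add_mul hm (by linarith) hm₂pos.ne' hdiff
  refine ⟨hP, hne, ?_⟩
  have hStr : (chan (diagonal ![l₁, l₂]) ρ₀).trace = 1 := by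
    rw [trace, Fin.sum_univ_two, diag_apply, diag_apply, hS, hS]
    exact_mod_cast hl
  rw [trace_kronecker_E₁_add_E₂, hStr, one_mul, hP, trace_E₁_mul, chan_diagonal_apply_self,
    Xop_mul_mul_Xop]
  simp only [Fin.sum_univ_two, hS, of_apply, cons_val', cons_val_zero, cons_val_one,
    cons_val_fin_one]
  intro h
  refine hne (Complex.ofReal_injective ?_)
  rw [h]
  push_cast
  ring

/-- In the sugar–chocolate model with |λ₁|² > 1/2 > |λ₂|² > 0 and
|μ₁|² > 1/2 > |μ₂|² > 0, the total probability law is violated: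
P(C=1) = tr(E₁Λ_C*(ρ)) = |μ₁|² differs from P(S=1,C=1) + P(S=2,C=1)
= |λ₂|²|μ₁|²/(|λ₂|²|μ₁|² + |λ₁|²|μ₂|²) whenever |λ₁|² ≠ |λ₂|². -/
theorem stmt_12 (l₁ l₂ m₁ m₂ : ℂ)
    (hl : Complex.normSq l₁ + Complex.normSq l₂ = 1)
    (hm : Complex.normSq m₁ + Complex.normSq m₂ = 1)
    (hl₁ : 1 / 2 < Complex.normSq l₁) (hl₂ : Complex.normSq l₂ < 1 / 2)
    (hl₂pos : 0 < Complex.normSq l₂)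
    (hm₁ : 1 / 2 < Complex.normSq m₁) (hm₂ : Complex.normSq m₂ < 1 / 2)
    (hm₂pos : 0 < Complex.normSq m₂)
    (hdiff : Complex.normSq l₁ ≠ Complex.normSq l₂) :
    (E₁ * chan !![m₁, 0; 0, m₂] ρ₀).trace = ((Complex.normSq m₁ : ℝ) : ℂ) ∧
    (Complex.normSq m₁ : ℝ) ≠
      Complex.normSq l₂ * Complex.normSq m₁ /
        (Complex.normSq l₂ * Complex.normSq m₁ + Complex.normSq l₁ * Complex.normSq m₂) ∧
    (E₁ * chan !![m₁, 0; 0, m₂] ρ₀).trace ≠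
      ((E₁ ⊗ₖ E₁) * (chan !![l₁, 0; 0, l₂] ρ₀ ⊗ₖ
          chan !![m₁, 0; 0, m₂] (Xop * chan !![l₁, 0; 0, l₂] ρ₀ * Xop))).trace +
      ((E₂ ⊗ₖ E₁) * (chan !![l₁, 0; 0, l₂] ρ₀ ⊗ₖ
          chan !![m₁, 0; 0, m₂] (Xop * chan !![l₁, 0; 0, l₂] ρ₀ * Xop))).trace :=
  stmt_12_general l₁ l₂ m₁ m₂ hl hm hm₁ hm₂pos hdiff
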